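/- If the shifted system x' = (A(t) − γ₀ μ'(t)/μ(t) I)x admits a nonuniform μ-dichotomy with invariant projection P ≡ I (identity), then x' = (A(t) − γ μ'(t)/μ(t) I)x admits a nonuniform μ-dichotomy with projection P ≡ I for every γ > γ₀; consequently (γ₀, ∞) ⊆ ρ^{ND}_μ(A). -/

import Mathlib

open Filter Topology

noncomputable section

/-- Bounded linear operators on ℝⁿ. -/
abbrev Op (n : ℕ) := EuclideanSpace ℝ (Fin n) →L[ℝ] EuclideanSpace ℝ (Fin n)

/-- μ is a growth rate: strictly increasing, positive, μ(0)=1, μ→∞ at +∞, μ→0 at -∞. -/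
def GrowthRate (μ : ℝ → ℝ) : Prop :=
  StrictMono μ ∧ (∀ t, 0 < μ t) ∧ μ 0 = 1 ∧
    Tendsto μ atTop atTop ∧ Tendsto μ atBot (nhds 0)

/-- The evolution operator Ψ admits a nonuniform μ-dichotomy with invariant projections P
and constants K, α, β, θ, ν. -/
def NuDWith {n : ℕ} (μ : ℝ → ℝ) (Ψ : ℝ → ℝ → Op n) (P : ℝ → Op n)
    (K α β θ ν : ℝ) : Prop :=
  (∀ t, P t ∘L P t = P t) ∧
  (∀ t s, P t ∘L Ψ t s = Ψ t s ∘L P s) ∧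
  1 ≤ K ∧ α < 0 ∧ 0 < β ∧ 0 ≤ θ ∧ 0 ≤ ν ∧ α + θ < 0 ∧ 0 < β - ν ∧
  (∀ t s, s ≤ t → ‖Ψ t s ∘L P s‖ ≤ K * (μ t / μ s) ^ α * μ s ^ (Real.sign s * θ)) ∧
  (∀ t s, t ≤ s → ‖Ψ t s ∘L (1 - P s)‖ ≤ K * (μ t / μ s) ^ β * μ s ^ (Real.sign s * ν))

/-- The evolution operator Ψ admits a nonuniform μ-dichotomy. -/
def NuD {n : ℕ} (μ : ℝ → ℝ) (Ψ : ℝ → ℝ → Op n) : Prop :=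
  ∃ P K α β θ ν, NuDWith μ Ψ P K α β θ ν

/-- The evolution operator Φ_γ(t,s) = (μ(t)/μ(s))^{-γ} Φ(t,s) of the shifted system. -/
def shiftEvo {n : ℕ} (μ : ℝ → ℝ) (γ : ℝ) (Φ : ℝ → ℝ → Op n) : ℝ → ℝ → Op n :=
  fun t s => (μ t / μ s) ^ (-γ) • Φ t s

/-- The nonuniform μ-resolvent set. -/
def resolventND {n : ℕ} (μ : ℝ → ℝ) (Φ : ℝ → ℝ → Op n) : Set ℝ :=
  {γ | NuD μ (shiftEvo μ γ Φ)}

/-- The nonuniform μ-dichotomy spectrum. -/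
def spectrumND {n : ℕ} (μ : ℝ → ℝ) (Φ : ℝ → ℝ → Op n) : Set ℝ :=
  (resolventND μ Φ)ᶜ

/-- Φ is the evolution operator of x' = A(t)x. -/
def IsEvolutionOp {n : ℕ} (A : ℝ → Op n) (Φ : ℝ → ℝ → Op n) : Prop :=
  (∀ s, Φ s s = 1) ∧ (∀ t τ s, Φ t τ ∘L Φ τ s = Φ t s) ∧
    (∀ s t, HasDerivAt (fun r => Φ r s) (A t ∘L Φ t s) t)

/-- U_γ = {(s,ξ) : sup_{t ≥ 0} ‖Φ(t,s)ξ‖ μ(t)^{-γ} < ∞}. -/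
def Uset {n : ℕ} (μ : ℝ → ℝ) (Φ : ℝ → ℝ → Op n) (γ : ℝ) : Set (ℝ × EuclideanSpace ℝ (Fin n)) :=
  {p | ∃ C, ∀ t, 0 ≤ t → ‖Φ t p.1 p.2‖ * μ t ^ (-γ) ≤ C}

/-- V_γ = {(s,ξ) : sup_{t ≤ 0} ‖Φ(t,s)ξ‖ μ(t)^{-γ} < ∞}. -/
def Vset {n : ℕ} (μ : ℝ → ℝ) (Φ : ℝ → ℝ → Op n) (γ : ℝ) : Set (ℝ × EuclideanSpace ℝ (Fin n)) :=
  {p | ∃ C, ∀ t, t ≤ 0 → ‖Φ t p.1 p.2‖ * μ t ^ (-γ) ≤ C}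

/-!
With `P ≡ I` the unstable estimate only asks for a nonnegative bound, and shifting by `γ`
factors as shifting by `γ₀` and then by `δ = γ - γ₀ > 0`. The extra factor `(μ t / μ s)^(-δ)`
merely lowers the stable exponent from `α` to `α - δ` for `t ≥ s`, which keeps `α - δ < 0` and
`α - δ + θ < 0`.
-/

section
variable {n : ℕ} {μ : ℝ → ℝ}

lemma shiftEvo_shiftEvo (hμ : ∀ t, 0 < μ t) (γ γ' : ℝ) (Φ : ℝ → ℝ → Op n) :
    shiftEvo μ γ (shiftEvo μ γ' Φ) = shiftEvo μ (γ + γ') Φ := by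
  funext t s
  simp only [shiftEvo, smul_smul, ← Real.rpow_add (div_pos (hμ t) (hμ s)), neg_add]

lemma norm_shiftEvo (hμ : ∀ t, 0 < μ t) (γ : ℝ) (Ψ : ℝ → ℝ → Op n) (t s : ℝ) :
    ‖shiftEvo μ γ Ψ t s‖ = (μ t / μ s) ^ (-γ) * ‖Ψ t s‖ := by
  have hρ : 0 < μ t / μ s := div_pos (hμ t) (hμ s)
  rw [shiftEvo, norm_smul, Real.norm_of_nonneg (Real.rpow_nonneg hρ.le _)]

theorem NuDWith.shiftEvo_of_nonneg (hμ : ∀ t, 0 < μ t) {Ψ : ℝ → ℝ → Op n} {K α β θ ν : ℝ}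
    (h : NuDWith μ Ψ (fun _ => 1) K α β θ ν) {δ : ℝ} (hδ : 0 ≤ δ) :
    NuDWith μ (shiftEvo μ δ Ψ) (fun _ => 1) K (α - δ) β θ ν := by
  obtain ⟨-, -, hK, hα, hβ, hθ, hν, hαθ, hβν, hstable, hunstable⟩ := h
  simp only [ContinuousLinearMap.one_def, ContinuousLinearMap.comp_id] at hstable
  refine ⟨fun _ => rfl, fun _ _ => rfl, hK, by linarith, hβ, hθ, hν, by linarith, hβν,
    fun t s hst => ?_, fun t s hts => by simpa using hunstable t s hts⟩
  have hρ : 0 < μ t / μ s := div_pos (hμ t) (hμ s)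
  calc ‖shiftEvo μ δ Ψ t s ∘L 1‖ = ‖shiftEvo μ δ Ψ t s‖ := rfl
    _ = (μ t / μ s) ^ (-δ) * ‖Ψ t s‖ := norm_shiftEvo hμ δ Ψ t s
    _ ≤ (μ t / μ s) ^ (-δ) * (K * (μ t / μ s) ^ α * μ s ^ (Real.sign s * θ)) := by
      gcongr; exact hstable t s hst
    _ = K * (μ t / μ s) ^ (α - δ) * μ s ^ (Real.sign s * θ) := by
      rw [sub_eq_add_neg, Real.rpow_add hρ]; ring

end

theorem stmt12_general (n : ℕ) (Φ : ℝ → ℝ → Op n) (μ : ℝ → ℝ) (hgr : GrowthRate μ)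
    (γ₀ : ℝ) (K α β θ ν : ℝ)
    (h : NuDWith μ (shiftEvo μ γ₀ Φ) (fun _ => (1 : Op n)) K α β θ ν) :
    (∀ γ : ℝ, γ₀ < γ →
      ∃ K' α' β' θ' ν', NuDWith μ (shiftEvo μ γ Φ) (fun _ => (1 : Op n)) K' α' β' θ' ν') ∧
    Set.Ioi γ₀ ⊆ resolventND μ Φ := by
  have hμ := hgr.2.1
  have shifted : ∀ γ : ℝ, γ₀ < γ →
      ∃ K' α' β' θ' ν', NuDWith μ (shiftEvo μ γ Φ) (fun _ => (1 : Op n)) K' α' β' θ' ν' := by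
    intro γ hγ
    have hδ : 0 ≤ γ - γ₀ := by linarith
    have h' := h.shiftEvo_of_nonneg hμ hδ
    rw [shiftEvo_shiftEvo hμ, sub_add_cancel] at h'
    exact ⟨_, _, _, _, _, h'⟩
  refine ⟨shifted, fun γ hγ => ?_⟩
  obtain ⟨K', α', β', θ', ν', h'⟩ := shifted γ hγ
  exact ⟨_, K', α', β', θ', ν', h'⟩

/-- if the γ₀-shifted system has a nonuniform μ-dichotomy with projection
P ≡ I, then so does the γ-shifted system for every γ > γ₀; hence (γ₀,∞) ⊆ ρ^{ND}_μ(A). -/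
theorem stmt12 (n : ℕ) (A : ℝ → Op n) (hA : Continuous A)
    (Φ : ℝ → ℝ → Op n) (hΦ : IsEvolutionOp A Φ)
    (μ : ℝ → ℝ) (hgr : GrowthRate μ) (hdiff : Differentiable ℝ μ)
    (γ₀ : ℝ) (K α β θ ν : ℝ)
    (h : NuDWith μ (shiftEvo μ γ₀ Φ) (fun _ => (1 : Op n)) K α β θ ν) :
    (∀ γ : ℝ, γ₀ < γ →
      ∃ K' α' β' θ' ν', NuDWith μ (shiftEvo μ γ Φ) (fun _ => (1 : Op n)) K' α' β' θ' ν') ∧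
    Set.Ioi γ₀ ⊆ resolventND μ Φ :=
  stmt12_general n Φ μ hgr γ₀ K α β θ ν h
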